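/- For every k ≥ 1, the number of isomorphism classes of interval graphs on 3k vertices satisfies i_{3k} ≥ k!/3^{3k}. -/

import Mathlib

open Nat

/-- A graph on `Fin n` is an interval graph if vertices can be assigned closed real
intervals so that distinct vertices are adjacent iff their intervals intersect. -/
def IsIntervalGraph {n : ℕ} (G : SimpleGraph (Fin n)) : Prop :=
  ∃ a b : Fin n → ℝ, (∀ v, a v ≤ b v) ∧
    ∀ u v : Fin n, u ≠ v →
      (G.Adj u v ↔ (Set.Icc (a u) (b u) ∩ Set.Icc (a v) (b v)).Nonempty)

/-- The number of isomorphism classes of interval graphs on `n` vertices. -/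
noncomputable def intervalGraphCount (n : ℕ) : ℕ :=
  Nat.card (Quot (fun G H : {G : SimpleGraph (Fin n) // IsIntervalGraph G} =>
    Nonempty (G.1 ≃g H.1)))

/-!
A permutation `π` of `Fin k` is encoded by the intervals `Lᵢ = [i, k + π i]`, `Rⱼ = [k + j, 2k]`
and the points `P_w = [w, w]`, carried by the vertices `inl i`, `inr (inl j)` and `inr (inr w)`
of `Fin k ⊕ Fin k ⊕ Fin k`. The point `P_w` meets exactly the `Lᵢ` with `i ≤ w`, so it has
degree `w + 1`, whereas every `Lᵢ` and `Rⱼ` has degree at least `k`. An isomorphism between the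
graphs of `π` and `σ` therefore fixes `P_w` whenever `w + 1 < k`, hence also `Lᵢ` for `i + 1 < k`
(it is the vertex meeting `P_w` exactly for `i ≤ w`), and since `Lᵢ` has degree
`(k - 1) + (π i + 1) + (k - i)` we get `π i = σ i` for all `i` but the last, so `π = σ`.
Thus `i_{3k} ≥ k!`.
-/

open Finset Sum

section IntervalGraph

variable {V α β : Type*}

/-- The intersection graph of the intervals `[a v, b v]`, provided `a ≤ b`. -/
def intervalGraph [LinearOrder α] (a b : V → α) : SimpleGraph V where
  Adj u v := u ≠ v ∧ a u ≤ b v ∧ a v ≤ b u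
  symm := ⟨fun _ _ h => ⟨h.1.symm, h.2.2, h.2.1⟩⟩
  loopless := ⟨fun _ h => h.1 rfl⟩

instance [DecidableEq V] [LinearOrder α] (a b : V → α) : DecidableRel (intervalGraph a b).Adj :=
  fun u v => inferInstanceAs (Decidable (u ≠ v ∧ a u ≤ b v ∧ a v ≤ b u))

lemma intervalGraph_comp_of_strictMono [LinearOrder α] [LinearOrder β] {f : α → β}
    (hf : StrictMono f) (a b : V → α) : intervalGraph (f ∘ a) (f ∘ b) = intervalGraph a b := by
  ext u v
  simp [intervalGraph, hf.le_iff_le]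

lemma isIntervalGraph_comap {n : ℕ} (e : Fin n ≃ V) {a b : V → ℝ} (hab : ∀ v, a v ≤ b v) :
    IsIntervalGraph ((intervalGraph a b).comap e) := by
  refine ⟨a ∘ e, b ∘ e, fun v => hab (e v), fun u v huv => ?_⟩
  simp [intervalGraph, Set.Icc_inter_Icc, e.injective.ne huv, hab, and_comm]

lemma card_le_intervalGraphCount {ι : Type*} {n : ℕ} (G : ι → SimpleGraph (Fin n))
    (hG : ∀ i, IsIntervalGraph (G i)) (hG_inj : ∀ i j, Nonempty (G i ≃g G j) → i = j) :
    Nat.card ι ≤ intervalGraphCount n := by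
  have hiso : Equivalence
      fun G H : {G : SimpleGraph (Fin n) // IsIntervalGraph G} => Nonempty (G.1 ≃g H.1) :=
    ⟨fun _ => ⟨.refl⟩, fun ⟨f⟩ => ⟨f.symm⟩, fun ⟨f⟩ ⟨g⟩ => ⟨f.trans g⟩⟩
  refine Nat.card_le_card_of_injective (fun i => Quot.mk _ ⟨G i, hG i⟩) fun i j hij => ?_
  exact hG_inj i j (hiso.eqvGen_iff.1 (Quot.eqvGen_exact hij))

end IntervalGraph

lemma Equiv.Perm.eq_of_subsingleton_setOf_ne {α : Type*} {π σ : Equiv.Perm α}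
    (h : {x | π x ≠ σ x}.Subsingleton) : π = σ := by
  ext x
  by_contra hx
  set y := σ.symm (π x)
  have hy : σ y = π x := σ.apply_symm_apply _
  have hyx : y ≠ x := fun e => hx (e ▸ hy).symm
  exact hyx (h (fun e => hyx (π.injective (e.trans hy))) hx)

lemma SimpleGraph.degree_eq_card_add_card_add_card {α β γ : Type*} [Fintype α] [Fintype β]
    [Fintype γ] (G : SimpleGraph (α ⊕ β ⊕ γ)) [DecidableRel G.Adj] (x : α ⊕ β ⊕ γ) :
    G.degree x =
      #{a | G.Adj x (inl a)} + #{b | G.Adj x (inr (inl b))} + #{c | G.Adj x (inr (inr c))} := by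
  simp only [← card_neighborFinset_eq_degree, neighborFinset_eq_filter, card_filter,
    Fintype.sum_sum_type, add_assoc]

section PermGraph

variable {k : ℕ}

def permLeft : Fin k ⊕ Fin k ⊕ Fin k → ℕ
  | inl i => i
  | inr (inl j) => k + j
  | inr (inr w) => w

def permRight (π : Equiv.Perm (Fin k)) : Fin k ⊕ Fin k ⊕ Fin k → ℕ
  | inl i => k + π i
  | inr (inl _) => 2 * k
  | inr (inr w) => w

def permGraph (π : Equiv.Perm (Fin k)) : SimpleGraph (Fin k ⊕ Fin k ⊕ Fin k) :=
  intervalGraph permLeft (permRight π)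

instance (π : Equiv.Perm (Fin k)) : DecidableRel (permGraph π).Adj :=
  inferInstanceAs (DecidableRel (intervalGraph _ _).Adj)

variable (π : Equiv.Perm (Fin k))

lemma permLeft_le_permRight (x : Fin k ⊕ Fin k ⊕ Fin k) : permLeft x ≤ permRight π x := by
  rcases x with i | j | w <;> simp only [permLeft, permRight] <;> omega

lemma isIntervalGraph_permGraph_comap {n : ℕ} (e : Fin n ≃ Fin k ⊕ Fin k ⊕ Fin k) :
    IsIntervalGraph ((permGraph π).comap e) := by
  rw [permGraph, ← intervalGraph_comp_of_strictMono (Nat.strictMono_cast (α := ℝ))]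
  exact isIntervalGraph_comap e fun x => Nat.cast_le.2 (permLeft_le_permRight π x)

@[simp] lemma permGraph_adj_inl_inl (i i' : Fin k) :
    (permGraph π).Adj (inl i) (inl i') ↔ i ≠ i' := by
  simp [permGraph, intervalGraph, permLeft, permRight]
  omega

@[simp] lemma permGraph_adj_inl_inr_inl (i j : Fin k) :
    (permGraph π).Adj (inl i) (inr (inl j)) ↔ j ≤ π i := by
  simp [permGraph, intervalGraph, permLeft, permRight]
  omega

@[simp] lemma permGraph_adj_inl_inr_inr (i w : Fin k) :
    (permGraph π).Adj (inl i) (inr (inr w)) ↔ i ≤ w := by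
  simp [permGraph, intervalGraph, permLeft, permRight]
  omega

@[simp] lemma permGraph_adj_inr_inl_inl (j i : Fin k) :
    (permGraph π).Adj (inr (inl j)) (inl i) ↔ j ≤ π i :=
  SimpleGraph.adj_comm .. |>.trans (permGraph_adj_inl_inr_inl π i j)

@[simp] lemma permGraph_adj_inr_inr_inl (w i : Fin k) :
    (permGraph π).Adj (inr (inr w)) (inl i) ↔ i ≤ w :=
  SimpleGraph.adj_comm .. |>.trans (permGraph_adj_inl_inr_inr π i w)

@[simp] lemma permGraph_adj_inr_inl_inr_inl (j j' : Fin k) :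
    (permGraph π).Adj (inr (inl j)) (inr (inl j')) ↔ j ≠ j' := by
  simp [permGraph, intervalGraph, permLeft, permRight]
  omega

@[simp] lemma permGraph_not_adj_inr_inl_inr_inr (j w : Fin k) :
    ¬ (permGraph π).Adj (inr (inl j)) (inr (inr w)) := by
  simp [permGraph, intervalGraph, permLeft, permRight]
  omega

@[simp] lemma permGraph_not_adj_inr_inr_inr_inl (w j : Fin k) :
    ¬ (permGraph π).Adj (inr (inr w)) (inr (inl j)) :=
  fun h => permGraph_not_adj_inr_inl_inr_inr π j w h.symm

@[simp] lemma permGraph_not_adj_inr_inr_inr_inr (w w' : Fin k) :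
    ¬ (permGraph π).Adj (inr (inr w)) (inr (inr w')) := by
  simp [permGraph, intervalGraph, permLeft, permRight]
  omega

lemma permGraph_degree_inl (i : Fin k) :
    (permGraph π).degree (inl i) = (k - 1) + (π i + 1) + (k - i) := by
  simp [SimpleGraph.degree_eq_card_add_card_add_card, filter_ge_eq_Iic, filter_le_eq_Ici,
    filter_ne]

lemma permGraph_degree_inr_inl (j : Fin k) :
    (permGraph π).degree (inr (inl j)) = (k - j) + (k - 1) := by
  have hpreimage : #{i | j ≤ π i} = #{i | j ≤ i} := by
    simp only [card_filter]
    exact Equiv.sum_comp π fun i => if j ≤ i then 1 else 0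
  simp [SimpleGraph.degree_eq_card_add_card_add_card, hpreimage, filter_le_eq_Ici, filter_not,
    filter_eq, card_univ_sdiff]

lemma permGraph_degree_inr_inr (w : Fin k) : (permGraph π).degree (inr (inr w)) = w + 1 := by
  simp [SimpleGraph.degree_eq_card_add_card_add_card, filter_ge_eq_Iic]

lemma permGraph_eq_inr_inr_of_degree_eq {x : Fin k ⊕ Fin k ⊕ Fin k} {w : Fin k}
    (hw : (w : ℕ) + 1 < k) (hx : (permGraph π).degree x = w + 1) : x = inr (inr w) := by
  rcases x with i | j | w'
  · rw [permGraph_degree_inl] at hx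
    omega
  · rw [permGraph_degree_inr_inl] at hx
    omega
  · rw [permGraph_degree_inr_inr] at hx
    rw [Fin.ext (by omega : (w' : ℕ) = w)]

variable {π} {σ : Equiv.Perm (Fin k)}

lemma permGraph_iso_apply_inr_inr (f : permGraph π ≃g permGraph σ) {w : Fin k}
    (hw : (w : ℕ) + 1 < k) : f (inr (inr w)) = inr (inr w) :=
  permGraph_eq_inr_inr_of_degree_eq σ hw (by rw [f.degree_eq, permGraph_degree_inr_inr])

lemma permGraph_iso_apply_inl (f : permGraph π ≃g permGraph σ) {i : Fin k}
    (hi : (i : ℕ) + 1 < k) : f (inl i) = inl i := by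
  have hfix : ∀ w : Fin k, w ≤ i → f (inr (inr w)) = inr (inr w) := fun w hw =>
    permGraph_iso_apply_inr_inr f (lt_of_le_of_lt (Nat.succ_le_succ hw) hi)
  have hadj : (permGraph σ).Adj (f (inl i)) (inr (inr i)) := by
    rw [← hfix i le_rfl, f.map_adj_iff]
    simp
  generalize hy : f (inl i) = y at hadj
  rcases y with m | j | w
  · have hmi : m ≤ i := by simpa using hadj
    have him : i ≤ m := by
      simpa [hy, hfix m hmi] using f.map_adj_iff (v := inl i) (w := inr (inr m))
    rw [le_antisymm hmi him]
  · simp at hadj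
  · simp at hadj

lemma permGraph_apply_eq_of_iso (f : permGraph π ≃g permGraph σ) {i : Fin k}
    (hi : (i : ℕ) + 1 < k) : π i = σ i := by
  have hdeg := f.degree_eq (inl i)
  rw [permGraph_iso_apply_inl f hi, permGraph_degree_inl, permGraph_degree_inl] at hdeg
  exact Fin.ext (by omega)

lemma eq_of_permGraph_iso (f : permGraph π ≃g permGraph σ) : π = σ := by
  refine Equiv.Perm.eq_of_subsingleton_setOf_ne
    (Set.Subsingleton.anti (t := {i | k ≤ i + 1}) ?_ fun i hi => ?_)
  · exact fun i (hi : k ≤ (i : ℕ) + 1) j (hj : k ≤ (j : ℕ) + 1) => Fin.ext (by omega)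
  · by_contra hlt
    exact hi (permGraph_apply_eq_of_iso f (by simpa using hlt))

end PermGraph

theorem intervalGraphCount_lower_general (k : ℕ) :
    (k ! : ℝ) / 3 ^ (3 * k) ≤ intervalGraphCount (3 * k) := by
  let e : Fin (3 * k) ≃ Fin k ⊕ Fin k ⊕ Fin k := (Fintype.equivFinOfCardEq (by simp; ring)).symm
  have hcount : k ! ≤ intervalGraphCount (3 * k) := by
    simpa [Fintype.card_perm] using
      card_le_intervalGraphCount (fun π : Equiv.Perm (Fin k) => (permGraph π).comap e)
        (fun π => isIntervalGraph_permGraph_comap π e) fun π σ ⟨f⟩ =>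
          eq_of_permGraph_iso ((SimpleGraph.Iso.comap e _).symm.trans
            (f.trans (SimpleGraph.Iso.comap e _)))
  calc (k ! : ℝ) / 3 ^ (3 * k) ≤ k ! := div_le_self (by positivity) (one_le_pow₀ (by norm_num))
    _ ≤ intervalGraphCount (3 * k) := by exact_mod_cast hcount

theorem intervalGraphCount_lower (k : ℕ) (hk : 1 ≤ k) :
    (k ! : ℝ) / 3 ^ (3 * k) ≤ intervalGraphCount (3 * k) :=
  intervalGraphCount_lower_general k
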